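/- arXiv:2009.14114 — 2 statements merged into one kernel-verified Lean document; each statement's English description precedes it below -/
import Mathlib

section
/- Let g : ℝⁿ → ℝⁿ be an L-Lipschitz map (with respect to ‖·‖₂) that is the gradient of a convex differentiable function h : ℝⁿ → ℝ. Then for all x, y ∈ ℝⁿ: ‖g(x) − g(y)‖₂² ≤ 2L·(h(x) − h(y) − ⟨g(y), x − y⟩). -/
open InnerProductSpace Set

/-! Convexity puts the tangent plane at `y` below `f`, and the `K`-Lipschitz gradient puts the
quadratic `f x + ⟪∇f x, z - x⟫ + K/2 ‖z - x‖²` above it. Comparing the two at the gradient step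
`z = x - (∇f x - ∇f y) / K` gives the bound. -/

variable {E : Type*} [NormedAddCommGroup E] [InnerProductSpace ℝ E] [CompleteSpace E]
  {f : E → ℝ}

theorem HasGradientAt.hasDerivAt_comp_add_smul {x v g : E} {t : ℝ}
    (hf : HasGradientAt f g (x + t • v)) :
    HasDerivAt (fun s : ℝ => f (x + s • v)) ⟪g, v⟫_ℝ t := by
  have hline : HasDerivAt (fun s : ℝ => x + s • v) v t := by
    simpa using ((hasDerivAt_id t).smul_const v).const_add x
  exact (hasGradientAt_iff_hasFDerivAt.mp hf).comp_hasDerivAt t hline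

theorem ConvexOn.add_inner_le_of_hasGradientAt (hconv : ConvexOn ℝ univ f) {x g : E}
    (hf : HasGradientAt f g x) (z : E) :
    f x + ⟪g, z - x⟫_ℝ ≤ f z := by
  have hline : ConvexOn ℝ univ (f ∘ AffineMap.lineMap (k := ℝ) x z) := by
    simpa using hconv.comp_affineMap (AffineMap.lineMap x z)
  have hderiv : HasDerivAt (f ∘ AffineMap.lineMap (k := ℝ) x z) ⟪g, z - x⟫_ℝ 0 := by
    convert HasGradientAt.hasDerivAt_comp_add_smul (t := 0) (v := z - x) (by simpa using hf)
      using 2 with t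
    simp [AffineMap.lineMap_apply_module', add_comm]
  have := hline.le_slope_of_hasDerivAt (mem_univ 0) (mem_univ 1) zero_lt_one hderiv
  simp only [slope_def_field, Function.comp_apply, AffineMap.lineMap_apply_one,
    AffineMap.lineMap_apply_zero, sub_zero, div_one] at this
  linarith

theorem le_add_inner_add_sq_of_lipschitzWith_gradient {f' : E → E} {K : NNReal}
    (hf : ∀ x, HasGradientAt f (f' x) x) (hLip : LipschitzWith K f') (x z : E) :
    f z ≤ f x + ⟪f' x, z - x⟫_ℝ + K / 2 * ‖z - x‖ ^ 2 := by
  set v := z - x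
  -- `f` along the segment, minus its quadratic upper model, is antitone for `t ≥ 0`
  let φ : ℝ → ℝ := fun t => f (x + t • v) - t * ⟪f' x, v⟫_ℝ - K / 2 * t ^ 2 * ‖v‖ ^ 2
  let φ' : ℝ → ℝ := fun t => ⟪f' (x + t • v) - f' x, v⟫_ℝ - K * t * ‖v‖ ^ 2
  have hφ : ∀ t, HasDerivAt φ (φ' t) t := fun t => by
    refine ((((hf (x + t • v)).hasDerivAt_comp_add_smul).sub
      ((hasDerivAt_id t).mul_const ⟪f' x, v⟫_ℝ)).sub
      (((hasDerivAt_pow 2 t).const_mul (K / 2 : ℝ)).mul_const (‖v‖ ^ 2))).congr_deriv ?_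
    simp only [φ', inner_sub_left]
    ring
  have hφ'_nonpos : ∀ t ∈ interior (Ici (0 : ℝ)), φ' t ≤ 0 := fun t ht => by
    rw [interior_Ici] at ht
    have hstep : ‖f' (x + t • v) - f' x‖ ≤ K * (t * ‖v‖) := by
      simpa [← dist_eq_norm, norm_smul, abs_of_pos (mem_Ioi.mp ht)] using
        hLip.dist_le_mul (x + t • v) x
    have := (real_inner_le_norm (f' (x + t • v) - f' x) v).trans
      (mul_le_mul_of_nonneg_right hstep (norm_nonneg v))
    simp only [φ']
    linarith
  have hanti : AntitoneOn φ (Ici 0) :=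
    antitoneOn_of_hasDerivWithinAt_nonpos (convex_Ici 0)
      (fun t _ => (hφ t).continuousAt.continuousWithinAt)
      (fun t _ => (hφ t).hasDerivWithinAt) hφ'_nonpos
  have := hanti self_mem_Ici (mem_Ici.mpr zero_le_one) zero_le_one
  simp only [φ, v, one_smul, zero_smul, add_zero, add_sub_cancel] at this
  linarith

theorem ConvexOn.sq_norm_sub_le_of_lipschitzWith_gradient (hconv : ConvexOn ℝ univ f)
    {f' : E → E} {K : NNReal} (hf : ∀ x, HasGradientAt f (f' x) x)
    (hLip : LipschitzWith K f') (x y : E) :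
    ‖f' x - f' y‖ ^ 2 ≤ 2 * K * (f x - f y - ⟪f' y, x - y⟫_ℝ) := by
  rcases eq_or_ne K 0 with rfl | hK0
  · have : f' x = f' y := by simpa using hLip.dist_le_mul x y
    simp [this]
  have hK : (0 : ℝ) < K := by positivity
  set d := f' x - f' y
  set z := x - (K : ℝ)⁻¹ • d
  have hbelow := hconv.add_inner_le_of_hasGradientAt (hf y) z
  have habove := le_add_inner_add_sq_of_lipschitzWith_gradient hf hLip x z
  have hzx : z - x = -((K : ℝ)⁻¹ • d) := by simp [z]
  have hzy : z - y = (x - y) - (K : ℝ)⁻¹ • d := by simp only [z]; abel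
  have hdd : (K : ℝ)⁻¹ * ⟪f' x, d⟫_ℝ - (K : ℝ)⁻¹ * ⟪f' y, d⟫_ℝ = (K : ℝ)⁻¹ * ‖d‖ ^ 2 := by
    rw [← mul_sub, ← inner_sub_left, real_inner_self_eq_norm_sq]
  rw [hzy, inner_sub_right, inner_smul_right] at hbelow
  rw [hzx, inner_neg_right, inner_smul_right, norm_neg, norm_smul, Real.norm_eq_abs,
    abs_of_pos (inv_pos.mpr hK)] at habove
  have hgap : (K : ℝ)⁻¹ / 2 * ‖d‖ ^ 2 ≤ f x - f y - ⟪f' y, x - y⟫_ℝ := by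
    have : (K : ℝ) / 2 * ((K : ℝ)⁻¹ * ‖d‖) ^ 2 = (K : ℝ)⁻¹ / 2 * ‖d‖ ^ 2 := by
      field_simp
    linarith
  calc ‖d‖ ^ 2 = 2 * K * ((K : ℝ)⁻¹ / 2 * ‖d‖ ^ 2) := by field_simp
    _ ≤ 2 * K * (f x - f y - ⟪f' y, x - y⟫_ℝ) := by gcongr

theorem stmt_8 {n : ℕ} (h : EuclideanSpace ℝ (Fin n) → ℝ)
    (hdiff : Differentiable ℝ h) (hconv : ConvexOn ℝ Set.univ h)
    (L : ℝ) (hL0 : 0 ≤ L)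
    (g : EuclideanSpace ℝ (Fin n) → EuclideanSpace ℝ (Fin n))
    (hg : ∀ x, g x = gradient h x)
    (hLip : LipschitzWith L.toNNReal g)
    (x y : EuclideanSpace ℝ (Fin n)) :
    ‖g x - g y‖ ^ 2 ≤ 2 * L * (h x - h y - ⟪g y, x - y⟫_ℝ) := by
  have hgrad : ∀ x, HasGradientAt h (g x) x := fun x => hg x ▸ (hdiff x).hasGradientAt
  simpa [Real.coe_toNNReal L hL0] using
    hconv.sq_norm_sub_le_of_lipschitzWith_gradient hgrad hLip x y
end

section
/- Let C ⊂ ℝⁿ be compact convex with diameter D, f : ℝⁿ → ℝ convex, differentiable, with L-Lipschitz gradient, x ∈ C, x* ∈ argmin_C f, and let g̃ ∈ ℝⁿ be any vector. Let v ∈ argmin_{u ∈ C} ⟨g̃, u⟩. Then ⟨g̃, v − x⟩ ≤ −(f(x) − f(x*)) + ‖g̃ − ∇f(x)‖₂ · D. -/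
open InnerProductSpace

lemma grad_ineq_aux {n : ℕ} (f : EuclideanSpace ℝ (Fin n) → ℝ)
    (hdiff : Differentiable ℝ f) (hconv : ConvexOn ℝ Set.univ f)
    (x y : EuclideanSpace ℝ (Fin n)) :
    ⟪gradient f x, y - x⟫_ℝ ≤ f y - f x := by
  have hgrad := (hdiff x).hasGradientAt
  have hfd : HasFDerivAt f (InnerProductSpace.toDual ℝ _ (gradient f x)) x :=
    (hasGradientAt_iff_hasFDerivAt).mp hgrad
  have hcd : HasDerivAt (fun t : ℝ => AffineMap.lineMap x y t) (y - x) 0 := by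
    simp only [AffineMap.lineMap_apply, vsub_eq_sub, vadd_eq_add]
    simpa using ((hasDerivAt_id (0:ℝ)).smul_const (y - x)).add_const x
  have hc0 : (AffineMap.lineMap x y : ℝ → EuclideanSpace ℝ (Fin n)) 0 = x := by simp
  have hg : HasDerivAt (f ∘ (AffineMap.lineMap x y : ℝ →ᵃ[ℝ] _))
      (⟪gradient f x, y - x⟫_ℝ) 0 := by
    rw [← hc0] at hfd
    have := hfd.comp_hasDerivAt 0 hcd
    simpa [InnerProductSpace.toDual_apply_apply, real_inner_comm] using this
  have hgc : ConvexOn ℝ Set.univ (f ∘ (AffineMap.lineMap x y : ℝ →ᵃ[ℝ] _)) := by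
    have := hconv.comp_affineMap (AffineMap.lineMap x y)
    simpa using this
  have := hgc.le_slope_of_hasDerivAt (Set.mem_univ 0) (Set.mem_univ 1) zero_lt_one hg
  simpa [slope, hc0] using this

theorem stmt_12 {n : ℕ} (C : Set (EuclideanSpace ℝ (Fin n)))
    (hCc : IsCompact C) (hCconv : Convex ℝ C) (hCne : C.Nonempty)
    (D : ℝ) (hD : IsGreatest ((fun p : EuclideanSpace ℝ (Fin n) × EuclideanSpace ℝ (Fin n) =>
      ‖p.2 - p.1‖) '' (C ×ˢ C)) D)
    (f : EuclideanSpace ℝ (Fin n) → ℝ) (hdiff : Differentiable ℝ f)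
    (hconv : ConvexOn ℝ Set.univ f)
    (L : ℝ) (hLip : LipschitzWith L.toNNReal (gradient f))
    (x : EuclideanSpace ℝ (Fin n)) (hx : x ∈ C)
    (xstar : EuclideanSpace ℝ (Fin n)) (hxstar : xstar ∈ C)
    (hmin : ∀ y ∈ C, f xstar ≤ f y)
    (gt : EuclideanSpace ℝ (Fin n))
    (v : EuclideanSpace ℝ (Fin n)) (hvC : v ∈ C)
    (hvmin : ∀ u ∈ C, ⟪gt, v⟫_ℝ ≤ ⟪gt, u⟫_ℝ) :
    ⟪gt, v - x⟫_ℝ ≤ -(f x - f xstar) + ‖gt - gradient f x‖ * D := by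
  have h1 : ⟪gt, v - x⟫_ℝ ≤ ⟪gt, xstar - x⟫_ℝ := by
    have := hvmin xstar hxstar
    simp only [inner_sub_right]
    linarith
  have h2 : ⟪gt, xstar - x⟫_ℝ =
      ⟪gradient f x, xstar - x⟫_ℝ + ⟪gt - gradient f x, xstar - x⟫_ℝ := by
    rw [inner_sub_left]; ring
  have h3 : ⟪gradient f x, xstar - x⟫_ℝ ≤ f xstar - f x := grad_ineq_aux f hdiff hconv x xstar
  have h4 : ⟪gt - gradient f x, xstar - x⟫_ℝ ≤ ‖gt - gradient f x‖ * D := by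
    calc ⟪gt - gradient f x, xstar - x⟫_ℝ ≤ ‖gt - gradient f x‖ * ‖xstar - x‖ :=
          real_inner_le_norm _ _
      _ ≤ ‖gt - gradient f x‖ * D := by
          apply mul_le_mul_of_nonneg_left _ (norm_nonneg _)
          exact hD.2 ⟨(x, xstar), Set.mk_mem_prod hx hxstar, rfl⟩
  linarith
end
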